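/- If k is odd, then ∫₀¹ x^j ψ(x) dx = 1/(k(k+2)) for every j = 1, 2, …, k. -/

import Mathlib

open Polynomial intervalIntegral

/-!
On polynomials of degree at most `k`, pairing with `ψ` only sees boundary values:
`∫ ψ p = p(0) ∫ ψ (1 - x) + p(1) ∫ ψ x`, so every moment `∫ x^j ψ` with `1 ≤ j ≤ k` equals
`c = ∫ x ψ`. To compute `c`, pair `ψ` with `P_n'`, where `P_n` is the shifted Legendre polynomial
and `n ∈ {k, k + 1}`. Integrating by parts, `∫ ψ P_n' = P_n(1) - ∫ ψ' P_n = (-1)^n`, because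
`P_n` is orthogonal to all polynomials of degree `< n` (Rodrigues' formula). Since
`P_n'(0) = -n(n+1)` and `P_n'(1) = (-1)^n n(n+1)`, this gives `n(n+1) (c - (-1)^n s) = 1` with
`s = ∫ (1 - x) ψ`. For odd `k` the two cases `n = k` and `n = k + 1` solve to `c = 1/(k(k+2))`.
-/

namespace Polynomial

theorem eval_iterate_derivative_eq_zero_of_pow_dvd {R : Type*} [CommSemiring R] {p q : R[X]} {x : R}
    {m n : ℕ} (hmn : m < n) (hdvd : q ^ n ∣ p) (hq : q.eval x = 0) :
    (derivative^[m] p).eval x = 0 :=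
  eval_eq_zero_of_dvd_of_eval_eq_zero (pow_sub_dvd_iterate_derivative_of_pow_dvd m hdvd)
    (by rw [eval_pow, hq, zero_pow (by omega)])

section ShiftedLegendre

variable (n : ℕ)

theorem shiftedLegendre_eval_zero : (shiftedLegendre n).eval 0 = 1 := by
  simp [← coeff_zero_eq_eval_zero, coeff_shiftedLegendre]

theorem shiftedLegendre_eval_one : (shiftedLegendre n).eval 1 = (-1) ^ n := by
  simpa [shiftedLegendre_eval_zero] using shiftedLegendre_eval_symm n (1 : ℤ)

theorem derivative_shiftedLegendre_eval_zero :
    (derivative (shiftedLegendre n)).eval 0 = -(n * (n + 1)) := by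
  simp [← coeff_zero_eq_eval_zero, coeff_derivative, coeff_shiftedLegendre]

theorem derivative_shiftedLegendre_eval_one :
    (derivative (shiftedLegendre n)).eval 1 = (-1) ^ n * (n * (n + 1)) := by
  have := congr_arg (fun p => (derivative p).eval 1)
    (neg_one_pow_mul_shiftedLegendre_comp_one_sub_X_eq n)
  simpa [derivative_comp, derivative_pow, derivative_shiftedLegendre_eval_zero] using this.symm

end ShiftedLegendre

theorem natCast_factorial_mul_map_shiftedLegendre {R : Type*} [CommRing R] (n : ℕ) :
    (n.factorial : R[X]) * (shiftedLegendre n).map (Int.castRingHom R) =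
      derivative^[n] (X ^ n * (1 - X) ^ n) := by
  have := congr_arg (map (Int.castRingHom R)) (factorial_mul_shiftedLegendre_eq n)
  rw [← iterate_derivative_map] at this
  simpa using this

theorem integral_eval_mul_eval_derivative (p q : ℝ[X]) (a b : ℝ) :
    ∫ x in a..b, p.eval x * (derivative q).eval x =
      p.eval b * q.eval b - p.eval a * q.eval a - ∫ x in a..b, (derivative p).eval x * q.eval x :=
  integral_mul_deriv_eq_deriv_mul (fun x _ => p.hasDerivAt x) (fun x _ => q.hasDerivAt x)
    (p.derivative.continuous.intervalIntegrable a b)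
    (q.derivative.continuous.intervalIntegrable a b)

theorem integral_eval_mul_eval_iterate_derivative_eq_zero {a b : ℝ} {p : ℝ[X]} {m : ℕ}
    (hp : ∀ i < m, (derivative^[i] p).eval a = 0 ∧ (derivative^[i] p).eval b = 0)
    {q : ℝ[X]} (hq : derivative^[m] q = 0) :
    ∫ x in a..b, q.eval x * (derivative^[m] p).eval x = 0 := by
  induction m generalizing q with
  | zero => simp [show q = 0 from hq]
  | succ m ih =>
    obtain ⟨ha, hb⟩ := hp m m.lt_succ_self
    rw [Function.iterate_succ_apply', integral_eval_mul_eval_derivative, ha, hb,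
      ih (fun i hi => hp i (by omega)) hq]
    ring

theorem integral_eval_mul_map_shiftedLegendre_eq_zero {n : ℕ} {q : ℝ[X]}
    (hq : derivative^[n] q = 0) :
    ∫ x in (0:ℝ)..1, q.eval x * ((shiftedLegendre n).map (Int.castRingHom ℝ)).eval x = 0 := by
  have hvanish : ∀ i < n, (derivative^[i] (X ^ n * (1 - X) ^ n : ℝ[X])).eval 0 = 0 ∧
      (derivative^[i] (X ^ n * (1 - X) ^ n : ℝ[X])).eval 1 = 0 := fun i hi =>
    ⟨eval_iterate_derivative_eq_zero_of_pow_dvd hi (dvd_mul_right _ _) eval_X,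
      eval_iterate_derivative_eq_zero_of_pow_dvd hi (dvd_mul_left _ _) (by simp)⟩
  have h := integral_eval_mul_eval_iterate_derivative_eq_zero hvanish hq
  rw [← natCast_factorial_mul_map_shiftedLegendre] at h
  simp only [eval_mul, eval_natCast, mul_left_comm _ (n.factorial : ℝ), integral_const_mul] at h
  exact (mul_eq_zero.mp h).resolve_left (by positivity)

end Polynomial

noncomputable def integralPairing (w : ℝ[X]) : ℝ[X] →ₗ[ℝ] ℝ where
  toFun p := ∫ x in (0:ℝ)..1, w.eval x * p.eval x
  map_add' p q := by
    simp only [eval_add, mul_add]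
    exact integral_add ((w.continuous.mul p.continuous).intervalIntegrable _ _)
      ((w.continuous.mul q.continuous).intervalIntegrable _ _)
  map_smul' c p := by
    simp only [eval_smul, smul_eq_mul, mul_left_comm _ c, integral_const_mul, RingHom.id_apply]

theorem integralPairing_apply (w p : ℝ[X]) :
    integralPairing w p = ∫ x in (0:ℝ)..1, w.eval x * p.eval x := rfl

section Moments

variable {k : ℕ} {ψ : ℝ[X]}

theorem integralPairing_eq_of_orthogonal (hk : 1 ≤ k)
    (horth : ∀ p : ℝ[X], p.degree ≤ k → p.eval 0 = 0 → p.eval 1 = 0 → integralPairing ψ p = 0)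
    {p : ℝ[X]} (hp : p.degree ≤ k) :
    integralPairing ψ p =
      p.eval 0 * integralPairing ψ (1 - X) + p.eval 1 * integralPairing ψ X := by
  have hX : (X : ℝ[X]) ∈ degreeLE ℝ k := mem_degreeLE.2 (degree_X_le.trans (by exact_mod_cast hk))
  have h1X : (1 - X : ℝ[X]) ∈ degreeLE ℝ k :=
    sub_mem (mem_degreeLE.2 (degree_one_le.trans (by simp))) hX
  have hq : p - p.eval 0 • (1 - X) - p.eval 1 • X ∈ degreeLE ℝ k :=
    sub_mem (sub_mem (mem_degreeLE.2 hp) (Submodule.smul_mem _ _ h1X)) (Submodule.smul_mem _ _ hX)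
  have h := horth _ (mem_degreeLE.1 hq) (by simp) (by simp)
  rw [map_sub, map_sub, map_smul, map_smul, smul_eq_mul, smul_eq_mul] at h
  linarith

theorem integralPairing_derivative_shiftedLegendre (h0 : ψ.eval 0 = 0) (h1 : ψ.eval 1 = 1)
    {n : ℕ} (hψ : ψ.natDegree ≤ n) :
    integralPairing ψ (derivative ((shiftedLegendre n).map (Int.castRingHom ℝ))) = (-1) ^ n := by
  have hψ' : derivative^[n] (derivative ψ) = 0 := by
    rw [← Function.iterate_succ_apply]
    exact iterate_derivative_eq_zero (by omega)
  rw [integralPairing_apply, integral_eval_mul_eval_derivative,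
    integral_eval_mul_map_shiftedLegendre_eq_zero hψ', h0, h1]
  simp [shiftedLegendre_eval_one]

theorem natCast_mul_integralPairing_X_sub_eq_one (hk : 1 ≤ k)
    (horth : ∀ p : ℝ[X], p.degree ≤ k → p.eval 0 = 0 → p.eval 1 = 0 → integralPairing ψ p = 0)
    (h0 : ψ.eval 0 = 0) (h1 : ψ.eval 1 = 1) (hψ : ψ.natDegree ≤ k) {n : ℕ} (hkn : k ≤ n)
    (hnk : n ≤ k + 1) :
    (n * (n + 1) : ℝ) * (integralPairing ψ X - (-1) ^ n * integralPairing ψ (1 - X)) = 1 := by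
  set P := (shiftedLegendre n).map (Int.castRingHom ℝ)
  have hdeg : (derivative P).natDegree ≤ k :=
    (natDegree_derivative_le P).trans (by grind [natDegree_map_le, natDegree_shiftedLegendre])
  have hP0 : (derivative P).eval 0 = -(n * (n + 1)) := by
    simp [P, derivative_map, derivative_shiftedLegendre_eval_zero]
  have hP1 : (derivative P).eval 1 = (-1) ^ n * (n * (n + 1)) := by
    simp [P, derivative_map, derivative_shiftedLegendre_eval_one]
  have h := integralPairing_eq_of_orthogonal hk horth (degree_le_of_natDegree_le hdeg)
  rw [integralPairing_derivative_shiftedLegendre h0 h1 (hψ.trans hkn), hP0, hP1] at h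
  have hsq : ((-1 : ℝ) ^ n) ^ 2 = 1 := by rw [← pow_mul, mul_comm, pow_mul, neg_one_sq, one_pow]
  linear_combination (-(-1) ^ n) * h + (1 - n * (n + 1) * integralPairing ψ X) * hsq

end Moments

/-- If k is odd, then ∫₀¹ x^j ψ(x) dx = 1/(k(k+2)) for j = 1,…,k. -/
theorem stmt_4 (k : ℕ) (hk : Odd k) (ψ : Polynomial ℝ)
    (hdeg : ψ.degree = (k : WithBot ℕ)) (h0 : ψ.eval 0 = 0) (h1 : ψ.eval 1 = 1)
    (horth : ∀ p : Polynomial ℝ, p.degree ≤ (k : WithBot ℕ) → p.eval 0 = 0 → p.eval 1 = 0 →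
      ∫ x in (0:ℝ)..1, ψ.eval x * p.eval x = 0) :
    ∀ j : ℕ, 1 ≤ j → j ≤ k →
      ∫ x in (0:ℝ)..1, x ^ j * ψ.eval x = 1 / ((k : ℝ) * (k + 2)) := by
  intro j hj hjk
  have hk1 : 1 ≤ k := hk.pos
  have hψ : ψ.natDegree ≤ k := natDegree_le_of_degree_le hdeg.le
  have hs := natCast_mul_integralPairing_X_sub_eq_one hk1 horth h0 h1 hψ le_rfl k.le_succ
  have hd := natCast_mul_integralPairing_X_sub_eq_one hk1 horth h0 h1 hψ (n := k + 1) k.le_succ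
    le_rfl
  have hj' := integralPairing_eq_of_orthogonal hk1 horth (p := X ^ j)
    (degree_X_pow_le j |>.trans (by exact_mod_cast hjk))
  rw [hk.neg_one_pow] at hs
  rw [hk.add_one.neg_one_pow] at hd
  simp only [eval_pow, eval_X, zero_pow (by omega : j ≠ 0), one_pow, zero_mul, one_mul,
    zero_add] at hj'
  push_cast at hd
  have hc : integralPairing ψ X * (k * (k + 2)) = 1 :=
    mul_left_cancel₀ (by positivity : (2 * (k + 1) : ℝ) ≠ 0)
      (by linear_combination (k + 2 : ℝ) * hs + (k : ℝ) * hd)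
  rw [show ∫ x in (0:ℝ)..1, x ^ j * ψ.eval x = integralPairing ψ (X ^ j) by
    simp [integralPairing_apply, mul_comm], hj', eq_div_iff (by positivity), hc]
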